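/- arXiv:0802.0244 — 4 statements merged into one kernel-verified Lean document; each statement's English description precedes it below -/
import Mathlib

section
/- Let K be a group, θ : K → K a group automorphism with θ∘θ = id, V a nonzero finite-dimensional complex vector space, and ρ : K → GL(V) a group homomorphism that is irreducible, i.e. the only complex subspaces of V invariant under ρ(k) for all k ∈ K are {0} and V. Suppose μ, μ′ : V → V are antilinear maps (additive, with μ(c • v) = conj(c) • μ(v) for all c ∈ ℂ, v ∈ V, and likewise for μ′) such that μ∘μ = id, μ′∘μ′ = id, and both satisfy the θ-equivariance μ(ρ(k) v) = ρ(θ(k)) (μ(v)) and μ′(ρ(k) v) = ρ(θ(k)) (μ′(v)) for all k ∈ K, v ∈ V. Then there exists c ∈ ℂ with |c| = 1 such that μ′(v) = c • μ(v) for all v ∈ V. -/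
/-! The composite `μ' ∘ μ` of the two antilinear involutions is ℂ-linear and, since `θ ∘ θ = id`,
commutes with every `ρ k`. By Schur's lemma it is a scalar `c`, so `μ' = c • μ`; then
`v = μ' (μ' v) = conj c * c • v` forces `|c| = 1`. -/

theorem Module.End.exists_eq_smul_of_forall_commute {𝕜 V ι : Type*} [Field 𝕜] [IsAlgClosed 𝕜]
    [AddCommGroup V] [Module 𝕜 V] [FiniteDimensional 𝕜 V] [Nontrivial V]
    (ρ : ι → Module.End 𝕜 V)
    (hirr : ∀ W : Submodule 𝕜 V, (∀ i, ∀ v ∈ W, ρ i v ∈ W) → W = ⊥ ∨ W = ⊤)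
    (T : Module.End 𝕜 V) (hT : ∀ i, Commute T (ρ i)) : ∃ c : 𝕜, ∀ v, T v = c • v := by
  obtain ⟨c, hc⟩ := T.exists_eigenvalue
  have hinvariant : ∀ i, ∀ v ∈ T.eigenspace c, ρ i v ∈ T.eigenspace c :=
    fun i => T.mapsTo_genEigenspace_of_comm (hT i) c 1
  have htop : T.eigenspace c = ⊤ := (hirr _ hinvariant).resolve_left hc
  exact ⟨c, fun v => Module.End.mem_eigenspace_iff.mp (htop ▸ Submodule.mem_top)⟩

theorem norm_eq_one_of_involutive_of_eq_smul {𝕜 V : Type*} [RCLike 𝕜] [AddCommGroup V]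
    [Module 𝕜 V] [Nontrivial V] {μ μ' : V → V} (hinv : ∀ v, μ (μ v) = v)
    (hinv' : ∀ v, μ' (μ' v) = v) (hconj' : ∀ (c : 𝕜) (v : V), μ' (c • v) = starRingEnd 𝕜 c • μ' v)
    {c : 𝕜} (hc : ∀ v, μ' v = c • μ v) : ‖c‖ = 1 := by
  obtain ⟨v, hv⟩ := exists_ne (0 : V)
  have hconj_mul : (starRingEnd 𝕜 c * c) • v = (1 : 𝕜) • v :=
    calc (starRingEnd 𝕜 c * c) • v = starRingEnd 𝕜 c • μ' (μ v) := by
          rw [hc (μ v), hinv, smul_smul]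
      _ = μ' (μ' v) := by rw [← hconj', ← hc]
      _ = (1 : 𝕜) • v := by rw [hinv', one_smul]
  have hsq : (‖c‖ : 𝕜) ^ 2 = 1 := by
    rw [← RCLike.conj_mul]
    exact smul_left_injective 𝕜 hv hconj_mul
  exact (pow_eq_one_iff_of_nonneg (norm_nonneg c) two_ne_zero).mp (by exact_mod_cast hsq)

/-- Uniqueness part of Theorem 3.1: two θ-equivariant antilinear involutions of an
irreducible complex `K`-module differ by a unimodular constant. -/
theorem stmt_1 {K : Type*} [Group K] (θ : K →* K) (hθ : ∀ k, θ (θ k) = k)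
    {V : Type*} [AddCommGroup V] [Module ℂ V] [FiniteDimensional ℂ V] [Nontrivial V]
    (ρ : K →* (V →ₗ[ℂ] V)ˣ)
    (hirr : ∀ W : Submodule ℂ V, (∀ (k : K), ∀ v ∈ W, (ρ k : V →ₗ[ℂ] V) v ∈ W) →
      W = ⊥ ∨ W = ⊤)
    (μ μ' : V → V)
    (hadd : ∀ v w : V, μ (v + w) = μ v + μ w)
    (hconj : ∀ (c : ℂ) (v : V), μ (c • v) = starRingEnd ℂ c • μ v)
    (hinv : ∀ v : V, μ (μ v) = v)
    (hequiv : ∀ (k : K) (v : V), μ ((ρ k : V →ₗ[ℂ] V) v) = (ρ (θ k) : V →ₗ[ℂ] V) (μ v))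
    (hadd' : ∀ v w : V, μ' (v + w) = μ' v + μ' w)
    (hconj' : ∀ (c : ℂ) (v : V), μ' (c • v) = starRingEnd ℂ c • μ' v)
    (hinv' : ∀ v : V, μ' (μ' v) = v)
    (hequiv' : ∀ (k : K) (v : V), μ' ((ρ k : V →ₗ[ℂ] V) v) = (ρ (θ k) : V →ₗ[ℂ] V) (μ' v)) :
    ∃ c : ℂ, ‖c‖ = 1 ∧ ∀ v : V, μ' v = c • μ v := by
  let ν : V →ₗ⋆[ℂ] V := { toFun := μ, map_add' := hadd, map_smul' := hconj }
  let ν' : V →ₗ⋆[ℂ] V := { toFun := μ', map_add' := hadd', map_smul' := hconj' }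
  have hcomm : ∀ k, Commute (ν'.comp ν) (ρ k : V →ₗ[ℂ] V) := fun k => LinearMap.ext fun v => by
    change μ' (μ ((ρ k : V →ₗ[ℂ] V) v)) = (ρ k : V →ₗ[ℂ] V) (μ' (μ v))
    rw [hequiv, hequiv', hθ]
  obtain ⟨c, hc⟩ := Module.End.exists_eq_smul_of_forall_commute _ hirr _ hcomm
  have hμ' : ∀ v, μ' v = c • μ v := fun v => by simpa [ν, ν', hinv] using hc (μ v)
  exact ⟨c, norm_eq_one_of_involutive_of_eq_smul hinv hinv' hconj' hμ', hμ'⟩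
end

section
/- Let K be a group, θ : K → K a group automorphism with θ∘θ = id, V a nonzero finite-dimensional complex vector space, and ρ : K → GL(V) a group homomorphism that is irreducible, i.e. the only complex subspaces of V invariant under ρ(k) for all k ∈ K are {0} and V. Suppose μ : V → V is an antilinear map (additive, with μ(c • v) = conj(c) • μ(v) for all c ∈ ℂ, v ∈ V) satisfying μ(ρ(k) v) = ρ(θ(k)) (μ(v)) for all k ∈ K, v ∈ V, and suppose there exist v₀ ∈ V with v₀ ≠ 0 and a ∈ ℂ with a ≠ 0 such that μ(v₀) = a • v₀. Then μ(μ(v)) = |a|² • v for all v ∈ V, and the map μ′ := |a|⁻¹ • μ is an antilinear θ-equivariant map with μ′∘μ′ = id. -/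
/-!
Since conjugation is an involution, `μ ∘ μ` is ℂ-linear, and since `θ` is an involution it commutes
with every `ρ k`. Its eigenspace for `conj a * a = |a|²` is therefore a `ρ`-invariant subspace
containing `v₀`, so by irreducibility it is all of `V`. As `|a|⁻¹` is real it commutes with the
antilinear `μ`, so `(|a|⁻¹ • μ) ∘ (|a|⁻¹ • μ) = |a|⁻² • μ ∘ μ = id`.
-/

theorem Module.End.eq_smul_of_commute_of_apply_eq_smul {R K V : Type*} [CommRing R]
    [AddCommGroup V] [Module R V] (ρ : K → Module.End R V)
    (hirr : ∀ W : Submodule R V, (∀ k, ∀ v ∈ W, ρ k v ∈ W) → W = ⊥ ∨ W = ⊤)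
    {T : Module.End R V} (hT : ∀ k v, T (ρ k v) = ρ k (T v))
    {v₀ : V} (hv₀ : v₀ ≠ 0) {c : R} (hc : T v₀ = c • v₀) (v : V) : T v = c • v := by
  have hinv : ∀ k, ∀ w ∈ T.eigenspace c, ρ k w ∈ T.eigenspace c := by
    intro k w hw
    rw [Module.End.mem_eigenspace_iff] at hw ⊢
    rw [hT, hw, map_smul]
  have htop : T.eigenspace c = ⊤ := (hirr _ hinv).resolve_left fun hbot ↦
    hv₀ <| (Submodule.mem_bot R).mp (hbot ▸ Module.End.mem_eigenspace_iff.mpr hc)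
  exact Module.End.mem_eigenspace_iff.mp (htop ▸ Submodule.mem_top)

theorem LinearMap.antilinear_apply_apply_eq_norm_sq_smul {K V : Type*} [AddCommGroup V]
    [Module ℂ V] (ρ : K → Module.End ℂ V) {θ : K → K} (hθ : Function.Involutive θ)
    (hirr : ∀ W : Submodule ℂ V, (∀ k, ∀ v ∈ W, ρ k v ∈ W) → W = ⊥ ∨ W = ⊤)
    (μ : V →ₗ⋆[ℂ] V) (hequiv : ∀ k v, μ (ρ k v) = ρ (θ k) (μ v))
    {v₀ : V} (hv₀ : v₀ ≠ 0) {a : ℂ} (hμv₀ : μ v₀ = a • v₀) (v : V) :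
    μ (μ v) = ((‖a‖ : ℂ) ^ 2) • v := by
  have hT : ∀ k w, μ.comp μ (ρ k w) = ρ k (μ.comp μ w) := by
    intro k w
    simp only [LinearMap.comp_apply, hequiv, hθ k]
  have hc : μ.comp μ v₀ = ((‖a‖ : ℂ) ^ 2) • v₀ := by
    rw [LinearMap.comp_apply, hμv₀, map_smulₛₗ, hμv₀, smul_smul, Complex.conj_mul']
  exact Module.End.eq_smul_of_commute_of_apply_eq_smul ρ hirr hT hv₀ hc v

theorem LinearMap.antilinear_inv_smul_apply_inv_smul_apply {V : Type*} [AddCommGroup V]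
    [Module ℂ V] (μ : V →ₗ⋆[ℂ] V) {r : ℝ} (hr : r ≠ 0)
    (hsq : ∀ v, μ (μ v) = ((r : ℂ) ^ 2) • v) (v : V) :
    (r : ℂ)⁻¹ • μ ((r : ℂ)⁻¹ • μ v) = v := by
  have hr' : (r : ℂ) ≠ 0 := Complex.ofReal_ne_zero.mpr hr
  rw [map_smulₛₗ, map_inv₀, Complex.conj_ofReal, hsq, smul_smul, smul_smul,
    show (r : ℂ)⁻¹ * (r : ℂ)⁻¹ * (r : ℂ) ^ 2 = 1 by field_simp, one_smul]

theorem stmt_3_general {K : Type*} [Group K] (θ : K →* K) (hθ : ∀ k, θ (θ k) = k)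
    {V : Type*} [AddCommGroup V] [Module ℂ V]
    (ρ : K →* (V →ₗ[ℂ] V)ˣ)
    (hirr : ∀ W : Submodule ℂ V, (∀ (k : K), ∀ v ∈ W, (ρ k : V →ₗ[ℂ] V) v ∈ W) →
      W = ⊥ ∨ W = ⊤)
    (μ : V → V)
    (hadd : ∀ v w : V, μ (v + w) = μ v + μ w)
    (hconj : ∀ (c : ℂ) (v : V), μ (c • v) = starRingEnd ℂ c • μ v)
    (hequiv : ∀ (k : K) (v : V), μ ((ρ k : V →ₗ[ℂ] V) v) = (ρ (θ k) : V →ₗ[ℂ] V) (μ v))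
    (v₀ : V) (hv₀ : v₀ ≠ 0) (a : ℂ) (ha : a ≠ 0) (hμv₀ : μ v₀ = a • v₀) :
    (∀ v : V, μ (μ v) = ((‖a‖ : ℂ) ^ 2) • v) ∧
    (∀ v w : V, ((‖a‖ : ℂ)⁻¹ • μ (v + w)) =
        (‖a‖ : ℂ)⁻¹ • μ v + (‖a‖ : ℂ)⁻¹ • μ w) ∧
    (∀ (c : ℂ) (v : V), ((‖a‖ : ℂ)⁻¹ • μ (c • v)) =
        starRingEnd ℂ c • ((‖a‖ : ℂ)⁻¹ • μ v)) ∧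
    (∀ (k : K) (v : V), ((‖a‖ : ℂ)⁻¹ • μ ((ρ k : V →ₗ[ℂ] V) v)) =
        (ρ (θ k) : V →ₗ[ℂ] V) ((‖a‖ : ℂ)⁻¹ • μ v)) ∧
    (∀ v : V, ((‖a‖ : ℂ)⁻¹ • μ ((‖a‖ : ℂ)⁻¹ • μ v)) = v) := by
  let μₗ : V →ₗ⋆[ℂ] V := { toFun := μ, map_add' := hadd, map_smul' := hconj }
  have hsq : ∀ v, μ (μ v) = ((‖a‖ : ℂ) ^ 2) • v :=
    μₗ.antilinear_apply_apply_eq_norm_sq_smul (fun k ↦ ρ k) hθ hirr hequiv hv₀ hμv₀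
  refine ⟨hsq, fun v w ↦ by rw [hadd, smul_add], fun c v ↦ by rw [hconj, smul_comm],
    fun k v ↦ by rw [hequiv, map_smul], ?_⟩
  exact μₗ.antilinear_inv_smul_apply_inv_smul_apply (norm_ne_zero_iff.mpr ha) hsq

/-- Normalization step in Theorem 3.1: if a θ-equivariant antilinear map on an irreducible
module has a nonzero eigenvector with eigenvalue `a`, then its square is `|a|² • id` and
`|a|⁻¹ • μ` is a θ-equivariant antilinear involution. -/
theorem stmt_3 {K : Type*} [Group K] (θ : K →* K) (hθ : ∀ k, θ (θ k) = k)
    {V : Type*} [AddCommGroup V] [Module ℂ V] [FiniteDimensional ℂ V] [Nontrivial V]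
    (ρ : K →* (V →ₗ[ℂ] V)ˣ)
    (hirr : ∀ W : Submodule ℂ V, (∀ (k : K), ∀ v ∈ W, (ρ k : V →ₗ[ℂ] V) v ∈ W) →
      W = ⊥ ∨ W = ⊤)
    (μ : V → V)
    (hadd : ∀ v w : V, μ (v + w) = μ v + μ w)
    (hconj : ∀ (c : ℂ) (v : V), μ (c • v) = starRingEnd ℂ c • μ v)
    (hequiv : ∀ (k : K) (v : V), μ ((ρ k : V →ₗ[ℂ] V) v) = (ρ (θ k) : V →ₗ[ℂ] V) (μ v))
    (v₀ : V) (hv₀ : v₀ ≠ 0) (a : ℂ) (ha : a ≠ 0) (hμv₀ : μ v₀ = a • v₀) :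
    (∀ v : V, μ (μ v) = ((‖a‖ : ℂ) ^ 2) • v) ∧
    (∀ v w : V, ((‖a‖ : ℂ)⁻¹ • μ (v + w)) =
        (‖a‖ : ℂ)⁻¹ • μ v + (‖a‖ : ℂ)⁻¹ • μ w) ∧
    (∀ (c : ℂ) (v : V), ((‖a‖ : ℂ)⁻¹ • μ (c • v)) =
        starRingEnd ℂ c • ((‖a‖ : ℂ)⁻¹ • μ v)) ∧
    (∀ (k : K) (v : V), ((‖a‖ : ℂ)⁻¹ • μ ((ρ k : V →ₗ[ℂ] V) v)) =
        (ρ (θ k) : V →ₗ[ℂ] V) ((‖a‖ : ℂ)⁻¹ • μ v)) ∧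
    (∀ v : V, ((‖a‖ : ℂ)⁻¹ • μ ((‖a‖ : ℂ)⁻¹ • μ v)) = v) :=
  stmt_3_general θ hθ ρ hirr μ hadd hconj hequiv v₀ hv₀ a ha hμv₀
end

section
/- Let G be a group, σ : G → G a group automorphism with σ∘σ = id, H ⊆ G a subgroup, and a ∈ G such that σ(H) = a H a⁻¹ (as subsets of G). Let φ : H → ℂˣ be a group homomorphism satisfying φ(a⁻¹ σ(h) a) = conj(φ(h)) for all h ∈ H. Suppose f : G → ℂ satisfies f(g h) = φ(h)⁻¹ · f(g) for all g ∈ G, h ∈ H, and define η(f) : G → ℂ by η(f)(g) = conj(f(σ(g) a)). Then η(f)(g h) = φ(h)⁻¹ · η(f)(g) for all g ∈ G, h ∈ H. Moreover, if θ : G → G is a group automorphism and k ∈ G satisfies σ(θ(k)) = k, then η(k · f) = θ(k) · η(f), where the left translation action is (g · f)(x) = f(g⁻¹ x). -/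
/-! The twisted pull-back `g ↦ conj (f (σ g * a))` is again a section because right
translation by `h ∈ H` becomes right translation by `a⁻¹ σ(h) a ∈ H`, on which `φ` takes the
conjugate value, which conjugation turns back into `φ(h)`. It intertwines the translations
because `σ` is a homomorphism carrying `θ(k)` to `k`. -/

section TwistedSection

variable {G : Type*} [Group G]

lemma inv_mul_map_mul_mem_of_image_subset {σ : G → G} {H : Subgroup G} {a : G}
    (hσH : σ '' (H : Set G) ⊆ (fun x => a * x * a⁻¹) '' (H : Set G)) {h : G} (hh : h ∈ H) :
    a⁻¹ * σ h * a ∈ H := by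
  obtain ⟨x, hx, hxh⟩ := hσH ⟨h, hh, rfl⟩
  simpa only [← hxh, mul_assoc, inv_mul_cancel_left, inv_mul_cancel, mul_one,
    SetLike.mem_coe] using hx

lemma map_mul_mul_eq_mul_conj (σ : G →* G) (a g h : G) :
    σ (g * h) * a = σ g * a * (a⁻¹ * σ h * a) := by
  rw [map_mul]
  group

lemma map_inv_mul_mul_eq_inv_mul (σ : G →* G) (a g : G) {k k' : G} (hk : σ k' = k) :
    σ (k'⁻¹ * g) * a = k⁻¹ * (σ g * a) := by
  rw [map_mul, map_inv, hk, mul_assoc]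

lemma conj_apply_map_mul_mul {σ : G →* G} {H : Subgroup G} {a : G}
    (hσH : σ '' (H : Set G) ⊆ (fun x => a * x * a⁻¹) '' (H : Set G)) {φ : H →* ℂˣ}
    (hφ : ∀ (h : H) (hm : a⁻¹ * σ ↑h * a ∈ H),
      (φ ⟨a⁻¹ * σ ↑h * a, hm⟩ : ℂ) = starRingEnd ℂ (φ h : ℂ))
    {f : G → ℂ} (hf : ∀ (g : G) (h : H), f (g * ↑h) = (φ h : ℂ)⁻¹ * f g) (g : G) (h : H) :
    starRingEnd ℂ (f (σ (g * ↑h) * a)) = (φ h : ℂ)⁻¹ * starRingEnd ℂ (f (σ g * a)) := by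
  have hmem := inv_mul_map_mul_mem_of_image_subset hσH h.2
  rw [map_mul_mul_eq_mul_conj, hf (σ g * a) ⟨_, hmem⟩, map_mul, map_inv₀, hφ h hmem,
    Complex.conj_conj]

end TwistedSection

theorem stmt_8_general {G : Type*} [Group G] (σ : G →* G)
    (H : Subgroup G) (a : G)
    (hσH : ⇑σ '' (H : Set G) = (fun x => a * x * a⁻¹) '' (H : Set G))
    (φ : H →* ℂˣ)
    (hφ3 : ∀ (h : H) (hm : a⁻¹ * σ ↑h * a ∈ H),
      (φ ⟨a⁻¹ * σ ↑h * a, hm⟩ : ℂ) = starRingEnd ℂ (φ h : ℂ))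
    (f : G → ℂ) (hf : ∀ (g : G) (h : H), f (g * ↑h) = (φ h : ℂ)⁻¹ * f g) :
    (∀ (g : G) (h : H),
      starRingEnd ℂ (f (σ (g * ↑h) * a)) = (φ h : ℂ)⁻¹ * starRingEnd ℂ (f (σ g * a))) ∧
    (∀ (θ : G ≃* G) (k : G), σ (θ k) = k → ∀ g : G,
      starRingEnd ℂ (f (k⁻¹ * (σ g * a))) = starRingEnd ℂ (f (σ ((θ k)⁻¹ * g) * a))) :=
  ⟨conj_apply_map_mul_mul hσH.subset hφ3 hf, fun _ _ hk g => by
    rw [map_inv_mul_mul_eq_inv_mul σ a g hk]⟩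

/-- Construction of the antilinear map η in Theorem 4.1: if σ(H) = aHa⁻¹ and
φ(a⁻¹σ(h)a) = conj(φ(h)), then η(f)(g) = conj(f(σ(g)a)) is again a section of L^φ,
and η intertwines left translation by k with left translation by θ(k) whenever σ(θ(k)) = k. -/
theorem stmt_8 {G : Type*} [Group G] (σ : G →* G) (hσ : ∀ g, σ (σ g) = g)
    (H : Subgroup G) (a : G)
    (hσH : ⇑σ '' (H : Set G) = (fun x => a * x * a⁻¹) '' (H : Set G))
    (φ : H →* ℂˣ)
    (hφ3 : ∀ (h : H) (hm : a⁻¹ * σ ↑h * a ∈ H),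
      (φ ⟨a⁻¹ * σ ↑h * a, hm⟩ : ℂ) = starRingEnd ℂ (φ h : ℂ))
    (f : G → ℂ) (hf : ∀ (g : G) (h : H), f (g * ↑h) = (φ h : ℂ)⁻¹ * f g) :
    (∀ (g : G) (h : H),
      starRingEnd ℂ (f (σ (g * ↑h) * a)) = (φ h : ℂ)⁻¹ * starRingEnd ℂ (f (σ g * a))) ∧
    (∀ (θ : G ≃* G) (k : G), σ (θ k) = k → ∀ g : G,
      starRingEnd ℂ (f (k⁻¹ * (σ g * a))) = starRingEnd ℂ (f (σ ((θ k)⁻¹ * g) * a))) :=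
  stmt_8_general σ H a hσH φ hφ3 f hf
end

section
/- Let G be a group, σ : G → G a group automorphism with σ∘σ = id, H ⊆ G a subgroup, and a ∈ G such that σ(H) = a H a⁻¹ (as subsets of G). Let φ : H → ℂˣ be a group homomorphism satisfying φ(u h u⁻¹) = φ(h) for all h ∈ H and u ∈ N_G(H). Then the map ψ : H → ℂˣ defined by ψ(h) = φ(h) · conj(φ(a⁻¹ σ(h) a)) is a group homomorphism and satisfies both ψ(a⁻¹ σ(h) a) = conj(ψ(h)) for all h ∈ H, and ψ(u h u⁻¹) = ψ(h) for all h ∈ H and u ∈ N_G(H). -/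
/-!
The map `θ g = a⁻¹ σ(g) a` is an automorphism of `G` with `θ(H) = H`, so it restricts to an
automorphism `τ` of `H` and preserves `N_G(H)`; hence `φ ∘ τ` again satisfies (2). Moreover
`θ ∘ θ` is conjugation by `(σ(a) a)⁻¹ ∈ N_G(H)`, so (2) gives `φ ∘ τ ∘ τ = φ`, and then
`ψ = φ · conj (φ ∘ τ)` satisfies `ψ ∘ τ = conj ψ` because `ℂˣ` is commutative.
-/

open Subgroup Function

section Normalizer

variable {G : Type*} [Group G] {H : Subgroup G}

theorem Subgroup.apply_mem_normalizer_of_map_eq {θ : G ≃* G} (hθ : H.map (θ : G →* G) = H)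
    {u : G} (hu : u ∈ normalizer (H : Set G)) : θ u ∈ normalizer (H : Set G) := by
  rw [← hθ]
  exact map_equiv_normalizer_eq H θ ▸ mem_map_of_mem _ hu

theorem Subgroup.mem_normalizer_of_map_eq_of_trans_eq_conj {θ : G ≃* G}
    (hθ : H.map (θ : G →* G) = H) {c : G} (hc : θ.trans θ = MulAut.conj c) :
    c ∈ normalizer (H : Set G) := by
  rw [mem_normalizer_iff_map_conj_eq, ← hc, MulEquiv.coe_monoidHom_trans, ← map_map, hθ, hθ]

end Normalizer

section Twist

variable {G : Type*} [Group G] {H : Subgroup G}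

def MonoidHom.restrictOfMapEq (f : G →* G) (hf : H.map f = H) : H →* H :=
  (f.comp H.subtype).codRestrict H fun h => hf.le (mem_map_of_mem f h.2)

@[simp]
theorem MonoidHom.coe_restrictOfMapEq_apply (f : G →* G) (hf : H.map f = H) (h : H) :
    (f.restrictOfMapEq hf h : G) = f h :=
  rfl

def twistedAut (σ : G →* G) (hσ : Involutive σ) (a : G) : G ≃* G :=
  (σ.toMulEquiv σ (MonoidHom.ext hσ) (MonoidHom.ext hσ)).trans (MulAut.conj a⁻¹)

variable {σ : G →* G} {hσ : Involutive σ} {a : G}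

@[simp]
theorem twistedAut_apply (g : G) : twistedAut σ hσ a g = a⁻¹ * σ g * a := by
  simp [twistedAut]

theorem twistedAut_trans_self :
    (twistedAut σ hσ a).trans (twistedAut σ hσ a) = MulAut.conj (σ a * a)⁻¹ := by
  ext g
  rw [MulEquiv.trans_apply, twistedAut_apply, twistedAut_apply, MulAut.conj_apply, map_mul, map_mul,
    map_inv, hσ]
  group

theorem map_twistedAut_eq (hσH : σ '' H = (fun x => a * x * a⁻¹) '' H) :
    H.map (twistedAut σ hσ a : G →* G) = H := by
  have : ⇑(twistedAut σ hσ a) = (fun x => a⁻¹ * x * a) ∘ σ := funext twistedAut_apply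
  apply SetLike.coe_injective
  rw [coe_map, MonoidHom.coe_coe, this, Set.image_comp, hσH, Set.image_image]
  simp only [mul_assoc, inv_mul_cancel_left, inv_mul_cancel, mul_one, Set.image_id']

end Twist

section TwistMul

variable {K M : Type*} [Monoid K] [CommMonoid M]

def MonoidHom.twistMul (φ : K →* M) (ι : M →* M) (τ : K →* K) : K →* M :=
  φ * ι.comp (φ.comp τ)

variable {ι : M →* M} {τ : K →* K} {φ : K →* M}

theorem MonoidHom.twistMul_apply (k : K) : φ.twistMul ι τ k = φ k * ι (φ (τ k)) :=
  rfl

theorem MonoidHom.twistMul_apply_map (hι : Involutive ι) (hφ : ∀ k, φ (τ (τ k)) = φ k) (k : K) :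
    φ.twistMul ι τ (τ k) = ι (φ.twistMul ι τ k) := by
  rw [twistMul_apply, twistMul_apply, hφ, map_mul, hι, mul_comm]

end TwistMul

section Invariant

variable {G M : Type*} [Group G] {H : Subgroup G}

def IsNormalizerInvariant [Monoid M] (φ : H →* M) : Prop :=
  ∀ u : G, u ∈ normalizer (H : Set G) → ∀ (h : H) (hm : u * ↑h * u⁻¹ ∈ H),
    φ ⟨u * ↑h * u⁻¹, hm⟩ = φ h

theorem IsNormalizerInvariant.twistMul [CommMonoid M] {ι : M →* M} {τ : H →* H} {φ : H →* M}
    (hφ : IsNormalizerInvariant φ) (hφτ : IsNormalizerInvariant (φ.comp τ)) :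
    IsNormalizerInvariant (φ.twistMul ι τ) := by
  intro u hu h hm
  simp only [MonoidHom.twistMul_apply, hφ u hu h hm, ← MonoidHom.comp_apply φ τ, hφτ u hu h hm]

variable [Monoid M] {φ : H →* M} {θ : G ≃* G} (hθ : H.map (θ : G →* G) = H)
include hθ

theorem IsNormalizerInvariant.comp_restrictOfMapEq (hφ : IsNormalizerInvariant φ) :
    IsNormalizerInvariant (φ.comp ((θ : G →* G).restrictOfMapEq hθ)) := by
  intro u hu h hm
  have hθu := apply_mem_normalizer_of_map_eq hθ hu
  set τ := (θ : G →* G).restrictOfMapEq hθ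
  have hm' : θ u * τ h * (θ u)⁻¹ ∈ H := (mem_normalizer_iff.mp hθu _).mp (τ h).2
  calc φ (τ ⟨u * h * u⁻¹, hm⟩) = φ ⟨θ u * τ h * (θ u)⁻¹, hm'⟩ := by
        congr 1; ext; simp [τ]
    _ = φ (τ h) := hφ _ hθu _ hm'

theorem IsNormalizerInvariant.apply_restrictOfMapEq_twice (hφ : IsNormalizerInvariant φ) {c : G}
    (hc : θ.trans θ = MulAut.conj c) (h : H) :
    φ ((θ : G →* G).restrictOfMapEq hθ ((θ : G →* G).restrictOfMapEq hθ h)) = φ h := by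
  have hcN := mem_normalizer_of_map_eq_of_trans_eq_conj hθ hc
  have hm : c * h * c⁻¹ ∈ H := (mem_normalizer_iff.mp hcN h).mp h.2
  calc _ = φ ⟨c * h * c⁻¹, hm⟩ := by
        congr 1; ext; simp [← MulEquiv.trans_apply, hc]
    _ = φ h := hφ c hcN h hm

end Invariant

/-- Modification step in the proof of Theorem 4.3: from a character φ of H satisfying
condition (2) (invariance under conjugation by the normalizer), the character
ψ(h) = φ(h)·conj(φ(a⁻¹σ(h)a)) satisfies both condition (3) and condition (2). -/
theorem stmt_11 {G : Type*} [Group G] (σ : G →* G) (hσ : ∀ g, σ (σ g) = g)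
    (H : Subgroup G) (a : G)
    (hσH : ⇑σ '' (H : Set G) = (fun x => a * x * a⁻¹) '' (H : Set G))
    (φ : H →* ℂˣ)
    (hφ2 : ∀ u : G, u ∈ Subgroup.normalizer (H : Set G) → ∀ (h : H) (hm : u * ↑h * u⁻¹ ∈ H),
      φ ⟨u * ↑h * u⁻¹, hm⟩ = φ h) :
    ∃ ψ : H →* ℂˣ,
      (∀ (h : H) (hm : a⁻¹ * σ ↑h * a ∈ H),
        (ψ h : ℂ) = (φ h : ℂ) * starRingEnd ℂ (φ ⟨a⁻¹ * σ ↑h * a, hm⟩ : ℂ)) ∧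
      (∀ (h : H) (hm : a⁻¹ * σ ↑h * a ∈ H),
        (ψ ⟨a⁻¹ * σ ↑h * a, hm⟩ : ℂ) = starRingEnd ℂ (ψ h : ℂ)) ∧
      (∀ u : G, u ∈ Subgroup.normalizer (H : Set G) → ∀ (h : H) (hm : u * ↑h * u⁻¹ ∈ H),
        ψ ⟨u * ↑h * u⁻¹, hm⟩ = ψ h) := by
  have hθ := map_twistedAut_eq (hσ := hσ) hσH
  set τ := (twistedAut σ hσ a : G →* G).restrictOfMapEq hθ
  have hτ (h : H) (hm : a⁻¹ * σ h * a ∈ H) : τ h = ⟨a⁻¹ * σ h * a, hm⟩ :=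
    Subtype.ext (twistedAut_apply (hσ := hσ) _)
  set ι : ℂˣ →* ℂˣ := Units.map (starRingEnd ℂ)
  have hι : Involutive ι := fun z => Units.ext (Complex.conj_conj _)
  have hφ : IsNormalizerInvariant φ := hφ2
  refine ⟨φ.twistMul ι τ, fun h hm => ?_, fun h hm => ?_,
    hφ.twistMul (hφ.comp_restrictOfMapEq hθ)⟩
  · rw [← hτ h hm]
    rfl
  · rw [← hτ h hm, MonoidHom.twistMul_apply_map hι
      (hφ.apply_restrictOfMapEq_twice hθ twistedAut_trans_self)]
    rfl
end
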